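/- arXiv:1202.6665 — 3 statements merged into one kernel-verified Lean document; each statement's English description precedes it below -/
import Mathlib

section
/- If X and Y are exterior spaces, f, g : X → Y are exterior maps and H : X ×̄ I → Y is an exterior homotopy from f to g, then the induced maps on end spaces coincide: Ě(f) = Ě(g). -/
open Set Topology Filter

universe u v

/-- An externology on a topological space: a nonempty family of open subsets closed under
finite intersections and under open supersets. -/
structure Externology (X : Type u) [TopologicalSpace X] where
  sets : Set (Set X)
  nonempty' : sets.Nonempty
  isOpen' : ∀ E ∈ sets, IsOpen E
  inter' : ∀ E ∈ sets, ∀ F ∈ sets, E ∩ F ∈ sets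
  superset' : ∀ E ∈ sets, ∀ U : Set X, IsOpen U → E ⊆ U → U ∈ sets

variable {X : Type u} {Y : Type v} [TopologicalSpace X] [TopologicalSpace Y]

/-- The limit space `L(X)` of an exterior space: the intersection of all exterior open sets. -/
def Elimit (ε : Externology X) : Set X := ⋂₀ ε.sets

/-- `V` is a `q₀`-saturated open subset of `E`: an open subset of `E` which is a union of
path-components of `E`. -/
def IsQSatOpen (E V : Set X) : Prop :=
  V ⊆ E ∧ IsOpen V ∧ ∀ x ∈ V, pathComponentIn E x ⊆ V

/-- An end point of an exterior space: a compatible choice of a path-component of each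
exterior open subset. -/
structure EndPt (ε : Externology X) where
  comp : Set X → Set X
  isComp' : ∀ E ∈ ε.sets, ∃ x ∈ E, comp E = pathComponentIn E x
  mono' : ∀ E ∈ ε.sets, ∀ F ∈ ε.sets, E ⊆ F → comp E ⊆ comp F

/-- The inverse limit topology on the end space. -/
instance EndPt.instTopologicalSpace (ε : Externology X) : TopologicalSpace (EndPt ε) :=
  .generateFrom {S | ∃ E ∈ ε.sets, ∃ V : Set X, IsQSatOpen E V ∧
    S = {a : EndPt ε | a.comp E ⊆ V}}

/-- The canonical map `e₀ : L(X) → Ě(X)` sending a point of the limit space to the family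
of its path-components. -/
def endOf (ε : Externology X) (x : Elimit ε) : EndPt ε where
  comp E := pathComponentIn E (x : X)
  isComp' E hE := ⟨(x : X), x.2 E hE, rfl⟩
  mono' _E _hE _F _hF h := pathComponentIn_mono h

/-- The gluing relation of the push-out `X ∪_{L(X)} Ě(X)`. -/
inductive CompletionRel (ε : Externology X) : X ⊕ EndPt ε → X ⊕ EndPt ε → Prop
  | glue (x : Elimit ε) : CompletionRel ε (Sum.inl (x : X)) (Sum.inr (endOf ε x))

/-- The underlying set of the completion: the push-out `X ∪_{L(X)} Ě(X)`. -/
def CompletionPts (ε : Externology X) : Type u := Quot (CompletionRel ε)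

/-- The canonical map `p₀ : X → X ∪_{L(X)} Ě(X)`. -/
def p0 (ε : Externology X) : X → CompletionPts ε := fun x => Quot.mk _ (Sum.inl x)

/-- The canonical map `incl₀ : Ě(X) → X ∪_{L(X)} Ě(X)`. -/
def incl0 (ε : Externology X) : EndPt ε → CompletionPts ε := fun a => Quot.mk _ (Sum.inr a)

/-- The family `𝒢₀` of subsets of the push-out `X ∪_{L(X)} Ě(X)`: `W ∈ 𝒢₀` iff `p₀⁻¹ W` is
open in `X`, `incl₀⁻¹ W` is open in `Ě(X)`, and each end `a ∈ incl₀⁻¹ W` admits `E ∈ ε(X)`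
and an open `G ⊆ π₀(E)` (encoded by the saturated open set `V = q₀⁻¹ G ⊆ E`) with
`a ∈ η₀⁻¹ G ⊆ incl₀⁻¹ W` and `q₀⁻¹ G ⊆ p₀⁻¹ W`. -/
def G0 (ε : Externology X) : Set (Set (CompletionPts ε)) :=
  {W | IsOpen (p0 ε ⁻¹' W) ∧ IsOpen {a : EndPt ε | incl0 ε a ∈ W} ∧
    ∀ a : EndPt ε, incl0 ε a ∈ W →
      ∃ E ∈ ε.sets, ∃ V : Set X, IsQSatOpen E V ∧ a.comp E ⊆ V ∧
        (∀ b : EndPt ε, b.comp E ⊆ V → incl0 ε b ∈ W) ∧ ∀ x ∈ V, p0 ε x ∈ W}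

/-- The topology `𝒢₀` on the completion. -/
instance CompletionPts.instTopologicalSpace (ε : Externology X) :
    TopologicalSpace (CompletionPts ε) := .generateFrom (G0 ε)

/-- The basic exterior subset `W₀(E) = p₀(E) ∪ incl₀(Ě(X))` of the completion. -/
def W0 (ε : Externology X) (E : Set X) : Set (CompletionPts ε) :=
  p0 ε '' E ∪ Set.range (incl0 ε)

lemma W0_mono (ε : Externology X) {E F : Set X} (h : E ⊆ F) : W0 ε E ⊆ W0 ε F :=
  union_subset_union_left _ (image_mono h)

/-- The externology of the completion `Č₀(X)`, with base `{W₀(E) | E ∈ ε(X)}`. -/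
def completionExternology (ε : Externology X) : Externology (CompletionPts ε) where
  sets := {U | IsOpen U ∧ ∃ E ∈ ε.sets, W0 ε E ⊆ U}
  nonempty' := by
    obtain ⟨E, hE⟩ := ε.nonempty'
    exact ⟨univ, isOpen_univ, E, hE, subset_univ _⟩
  isOpen' := fun U hU => hU.1
  inter' := by
    rintro U ⟨hUo, E, hE, hEU⟩ V ⟨hVo, F, hF, hFV⟩
    refine ⟨hUo.inter hVo, E ∩ F, ε.inter' E hE F hF, ?_⟩
    exact subset_inter ((W0_mono ε inter_subset_left).trans hEU)
      ((W0_mono ε inter_subset_right).trans hFV)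
  superset' := by
    rintro U ⟨hUo, E, hE, hEU⟩ V hVo hUV
    exact ⟨hVo, E, hE, hEU.trans hUV⟩

/-- An exterior map between exterior spaces. -/
def IsExteriorMap (εX : Externology X) (εY : Externology Y) (f : X → Y) : Prop :=
  Continuous f ∧ ∀ E ∈ εY.sets, f ⁻¹' E ∈ εX.sets

/-- An isomorphism of exterior spaces. -/
def IsExteriorIso (εX : Externology X) (εY : Externology Y) (f : X → Y) : Prop :=
  IsExteriorMap εX εY f ∧ ∃ g : Y → X, IsExteriorMap εY εX g ∧ g ∘ f = id ∧ f ∘ g = id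

/-- An exterior space is `Č₀`-complete if the canonical map `p₀ : X → Č₀(X)` is an
isomorphism of exterior spaces. -/
def C0Complete (ε : Externology X) : Prop :=
  IsExteriorIso ε (completionExternology ε) (p0 ε)

/-- A `π₀`-`ε(X)`-net: a net eventually contained in a single path-component of every
exterior open set. -/
def IsPi0Net {D : Type*} [Preorder D] (ε : Externology X) (u : D → X) : Prop :=
  ∀ E ∈ ε.sets, ∃ C : Set X, (∃ y ∈ E, C = pathComponentIn E y) ∧ ∀ᶠ δ in atTop, u δ ∈ C

/-- The `r`-exterior externology of a flow: open sets absorbing every positive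
semi-trajectory. -/
def rExt (φ : Flow ℝ X) : Externology X where
  sets := {N | IsOpen N ∧ ∀ x : X, ∃ r₀ : ℝ, ∀ t : ℝ, r₀ < t → φ t x ∈ N}
  nonempty' := ⟨univ, isOpen_univ, fun _ => ⟨0, fun _ _ => mem_univ _⟩⟩
  isOpen' := fun _ hN => hN.1
  inter' := by
    rintro N ⟨hNo, hN⟩ M ⟨hMo, hM⟩
    refine ⟨hNo.inter hMo, fun x => ?_⟩
    obtain ⟨r, hr⟩ := hN x
    obtain ⟨s, hs⟩ := hM x
    exact ⟨max r s, fun t ht =>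
      ⟨hr t ((le_max_left r s).trans_lt ht), hs t ((le_max_right r s).trans_lt ht)⟩⟩
  superset' := by
    rintro N ⟨_, hN⟩ U hUo hNU
    exact ⟨hUo, fun x => (hN x).imp fun r h t ht => hNU (h t ht)⟩

/-- The `ω^r`-limit set of a point for a flow. -/
def omegaR (φ : Flow ℝ X) (x : X) : Set X :=
  ⋂ t : ℝ, closure ((fun s : ℝ => φ s x) '' Ici t)

/-- The set of critical (rest) points of a flow. -/
def criticalSet (φ : Flow ℝ X) : Set X := {x | ∀ r : ℝ, φ r x = x}

/-- The set of periodic points of a flow. -/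
def periodicSet (φ : Flow ℝ X) : Set X := {x | ∃ r : ℝ, r ≠ 0 ∧ φ r x = x}

/-- The global `Ω^r`-limit of a flow. -/
def OmegaRSet (φ : Flow ℝ X) : Set X := ⋃ x : X, omegaR φ x

/-- The compatibility conditions making an exterior space with a flow an `r`-exterior flow:
`φ : ℝ^r ×̄ M_d → M` is exterior and each `F_t : M ×̄ I → M`, `F_t(x,s) = φ(ts, x)`,
is exterior. -/
structure IsRExteriorFlow (ε : Externology X) (φ : Flow ℝ X) : Prop where
  absorb : ∀ E ∈ ε.sets, ∀ x : X, ∃ r₀ : ℝ, ∀ t : ℝ, r₀ < t → φ t x ∈ E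
  homotopyExt : ∀ t : ℝ, ∀ E ∈ ε.sets, ∃ G ∈ ε.sets, ∀ x ∈ G, ∀ s ∈ Icc (0:ℝ) 1,
    φ (t * s) x ∈ E

/-!
An end `a` of `X` picks one path-component of every exterior open set. Pull back an exterior
`E ⊆ Y` along `f` and `g`: both preimages contain some exterior `G` with `H(G × I) ⊆ E`, so a
point `z ∈ a(G)` lies in `a(f⁻¹E)` and in `a(g⁻¹E)`. Hence `Ě(f)(a)(E)` is the component of
`f z`, `Ě(g)(a)(E)` that of `g z`, and the track `s ↦ H(z, s)` joins them inside `E`.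
-/

variable {εX : Externology X} {εY : Externology Y}

namespace EndPt

lemma comp_nonempty (a : EndPt εX) {E : Set X} (hE : E ∈ εX.sets) : (a.comp E).Nonempty := by
  obtain ⟨x, hx, hcomp⟩ := a.isComp' E hE
  exact ⟨x, hcomp ▸ mem_pathComponentIn_self hx⟩

lemma comp_subset (a : EndPt εX) {E : Set X} (hE : E ∈ εX.sets) : a.comp E ⊆ E := by
  obtain ⟨x, -, hcomp⟩ := a.isComp' E hE
  exact hcomp ▸ pathComponentIn_subset

lemma joinedIn_of_mem_comp (a : EndPt εX) {E : Set X} (hE : E ∈ εX.sets) {x y : X}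
    (hx : x ∈ a.comp E) (hy : y ∈ a.comp E) : JoinedIn E x y := by
  obtain ⟨_, -, hcomp⟩ := a.isComp' E hE
  rw [hcomp] at hx hy
  exact JoinedIn.trans (JoinedIn.symm hx) hy

end EndPt

lemma IsExteriorMap.joinedIn_of_mem_comp {f : X → Y} (hf : IsExteriorMap εX εY f)
    (a : EndPt εX) {E : Set Y} (hE : E ∈ εY.sets) {x y : X}
    (hx : x ∈ a.comp (f ⁻¹' E)) (hy : y ∈ a.comp (f ⁻¹' E)) : JoinedIn E (f x) (f y) :=
  ((a.joinedIn_of_mem_comp (hf.2 E hE) hx hy).map hf.1).mono (image_preimage_subset f E)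

lemma IsExteriorMap.of_homotopy_slice {H : X × unitInterval → Y} (Hcont : Continuous H)
    (Hext : ∀ E ∈ εY.sets, ∃ G ∈ εX.sets, ∀ x ∈ G, ∀ s : unitInterval, H (x, s) ∈ E)
    (s : unitInterval) {f : X → Y} (hs : ∀ x, H (x, s) = f x) : IsExteriorMap εX εY f := by
  have hfH : f = fun x => H (x, s) := funext fun x => (hs x).symm
  have hcont : Continuous f := hfH ▸ Hcont.comp (Continuous.prodMk_left s)
  refine ⟨hcont, fun E hE => ?_⟩
  obtain ⟨G, hG, hGE⟩ := Hext E hE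
  exact εX.superset' G hG _ ((εY.isOpen' E hE).preimage hcont)
    fun x hx => show f x ∈ E from hs x ▸ hGE x hx s

lemma joinedIn_homotopy_track {H : X × unitInterval → Y} (Hcont : Continuous H) {E : Set Y}
    {z : X} (hz : ∀ s : unitInterval, H (z, s) ∈ E) : JoinedIn E (H (z, 0)) (H (z, 1)) :=
  ⟨⟨⟨fun s => H (z, s), Hcont.comp (Continuous.prodMk_right z)⟩, rfl, rfl⟩, hz⟩

theorem stmt_4_general (εX : Externology X) (εY : Externology Y) (f g : X → Y)
    (H : X × unitInterval → Y) (Hcont : Continuous H)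
    (H0 : ∀ x, H (x, 0) = f x) (H1 : ∀ x, H (x, 1) = g x)
    (Hext : ∀ E ∈ εY.sets, ∃ G ∈ εX.sets, ∀ x ∈ G, ∀ s : unitInterval, H (x, s) ∈ E) :
    ∀ a : EndPt εX, ∀ E ∈ εY.sets, ∀ x ∈ a.comp (f ⁻¹' E), ∀ y ∈ a.comp (g ⁻¹' E),
      pathComponentIn E (f x) = pathComponentIn E (g y) := by
  intro a E hE x hx y hy
  have hf := IsExteriorMap.of_homotopy_slice Hcont Hext 0 H0
  have hg := IsExteriorMap.of_homotopy_slice Hcont Hext 1 H1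
  obtain ⟨G, hG, hGE⟩ := Hext E hE
  obtain ⟨z, hz⟩ := a.comp_nonempty hG
  have hGf : G ⊆ f ⁻¹' E := fun w hw => show f w ∈ E from H0 w ▸ hGE w hw 0
  have hGg : G ⊆ g ⁻¹' E := fun w hw => show g w ∈ E from H1 w ▸ hGE w hw 1
  have hzf : z ∈ a.comp (f ⁻¹' E) := a.mono' G hG _ (hf.2 E hE) hGf hz
  have hzg : z ∈ a.comp (g ⁻¹' E) := a.mono' G hG _ (hg.2 E hE) hGg hz
  have hfg : JoinedIn E (f z) (g z) :=
    H0 z ▸ H1 z ▸ joinedIn_homotopy_track Hcont (hGE z (a.comp_subset hG hz))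
  have hxy : JoinedIn E (f x) (g y) :=
    ((hf.joinedIn_of_mem_comp a hE hx hzf).trans hfg).trans
      (hg.joinedIn_of_mem_comp a hE hy hzg).symm
  exact (pathComponentIn_congr (hxy : g y ∈ pathComponentIn E (f x))).symm

/-- exterior homotopic exterior maps induce the same map of end spaces,
i.e. `Ě(f)(a) = Ě(g)(a)` componentwise for every end `a`. -/
theorem stmt_4 (εX : Externology X) (εY : Externology Y) (f g : X → Y)
    (hf : IsExteriorMap εX εY f) (hg : IsExteriorMap εX εY g)
    (H : X × unitInterval → Y) (Hcont : Continuous H)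
    (H0 : ∀ x, H (x, 0) = f x) (H1 : ∀ x, H (x, 1) = g x)
    (Hext : ∀ E ∈ εY.sets, ∃ G ∈ εX.sets, ∀ x ∈ G, ∀ s : unitInterval, H (x, s) ∈ E) :
    ∀ a : EndPt εX, ∀ E ∈ εY.sets, ∀ x ∈ a.comp (f ⁻¹' E), ∀ y ∈ a.comp (g ⁻¹' E),
      pathComponentIn E (f x) = pathComponentIn E (g y) :=
  stmt_4_general εX εY f g H Hcont H0 H1 Hext
end

section
/- For an exterior space X, the collection 𝒢₀ of subsets W of the pushout X ∪_{L(X)} Ě(X) such that p₀⁻¹(W) is open in X, incl₀⁻¹(W) is open in Ě(X), and for each end a ∈ incl₀⁻¹(W) there exist E ∈ ε(X) and an open G ⊂ π₀(E) with a ∈ η₀⁻¹(G) ⊂ incl₀⁻¹(W) and q₀⁻¹(G) ⊂ p₀⁻¹(W), is a topology; moreover incl₀ : Ě(X) → incl₀(Ě(X)) is a homeomorphism onto its image with this topology. -/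
open Set Topology Filter

universe u v

variable {X : Type u} {Y : Type v} [TopologicalSpace X] [TopologicalSpace Y]

/- A set `W` of the push-out is the same thing as a pair `(p₀⁻¹ W, incl₀⁻¹ W)` agreeing
on the limit space, so every basic open set `{a | a.comp E ⊆ V}` of `Ě(X)` extends, together with
`V ⊆ X`, to a member of `𝒢₀`; this makes `incl₀` inducing. That `𝒢₀` is itself a topology comes
down to saturated open subsets of `E₁` and `E₂` intersecting to one of `E₁ ∩ E₂`. -/

open TopologicalSpace

namespace IsQSatOpen

variable {E V E' V' : Set X}

lemma mem_iff_pathComponentIn_subset (hV : IsQSatOpen E V) {x : X} (hx : x ∈ E) :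
    x ∈ V ↔ pathComponentIn E x ⊆ V :=
  ⟨hV.2.2 x, fun h => h (mem_pathComponentIn_self hx)⟩

lemma inter (hV : IsQSatOpen E V) (hV' : IsQSatOpen E' V') : IsQSatOpen (E ∩ E') (V ∩ V') :=
  ⟨inter_subset_inter hV.1 hV'.1, hV.2.1.inter hV'.2.1, fun x hx =>
    subset_inter ((pathComponentIn_mono inter_subset_left).trans (hV.2.2 x hx.1))
      ((pathComponentIn_mono inter_subset_right).trans (hV'.2.2 x hx.2))⟩

end IsQSatOpen

namespace EndPt

variable {ε : Externology X} (a : EndPt ε) {E F V : Set X}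

lemma comp_nonempty_s5 (hE : E ∈ ε.sets) : (a.comp E).Nonempty := by
  obtain ⟨x, hx, hcomp⟩ := a.isComp' E hE
  exact ⟨x, hcomp ▸ mem_pathComponentIn_self hx⟩

lemma comp_subset_of_mem (hE : E ∈ ε.sets) (hV : IsQSatOpen E V) {x : X}
    (hxa : x ∈ a.comp E) (hxV : x ∈ V) : a.comp E ⊆ V := by
  obtain ⟨y, _, hcomp⟩ := a.isComp' E hE
  rw [hcomp] at hxa ⊢
  exact pathComponentIn_congr hxa ▸ hV.2.2 x hxV

lemma comp_subset_of_comp_subset (hE : E ∈ ε.sets) (hF : F ∈ ε.sets) (hEF : E ⊆ F)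
    (hV : IsQSatOpen F V) (h : a.comp E ⊆ V) : a.comp F ⊆ V := by
  obtain ⟨x, hx⟩ := a.comp_nonempty_s5 hE
  exact a.comp_subset_of_mem hF hV (a.mono' E hE F hF hEF hx) (h hx)

end EndPt

namespace CompletionPts

variable {ε : Externology X}

def lift {Z : Sort*} (f : X → Z) (g : EndPt ε → Z) (h : ∀ x : Elimit ε, f x = g (endOf ε x)) :
    CompletionPts ε → Z :=
  Quot.lift (Sum.elim f g) (by rintro _ _ ⟨x⟩; exact h x)

/-- The subset of the push-out that pulls back to `A` along `p₀` and to `B` along `incl₀`. -/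
def glueSets (A : Set X) (B : Set (EndPt ε))
    (h : ∀ x : Elimit ε, (x : X) ∈ A ↔ endOf ε x ∈ B) : Set (CompletionPts ε) :=
  lift (· ∈ A) (· ∈ B) fun x => propext (h x)

end CompletionPts

open CompletionPts

lemma incl0_injective (ε : Externology X) : Function.Injective (incl0 ε) := by
  classical
  let toEnd : CompletionPts ε → Option (EndPt ε) :=
    lift (fun x => if hx : x ∈ Elimit ε then some (endOf ε ⟨x, hx⟩) else none) some
      fun x => dif_pos x.2
  exact fun a b hab => Option.some_injective _ (congrArg toEnd hab)

section G0

variable {ε : Externology X}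

lemma univ_mem_G0 : univ ∈ G0 ε := by
  refine ⟨isOpen_univ, isOpen_univ, fun a _ => ?_⟩
  obtain ⟨E, hE⟩ := ε.nonempty'
  obtain ⟨x, _, hcomp⟩ := a.isComp' E hE
  exact ⟨E, hE, E, ⟨subset_rfl, ε.isOpen' E hE, fun _ _ => pathComponentIn_subset⟩,
    hcomp ▸ pathComponentIn_subset, fun _ _ => mem_univ _, fun _ _ => mem_univ _⟩

lemma inter_mem_G0 {W₁ W₂ : Set (CompletionPts ε)} (h₁ : W₁ ∈ G0 ε) (h₂ : W₂ ∈ G0 ε) :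
    W₁ ∩ W₂ ∈ G0 ε := by
  refine ⟨h₁.1.inter h₂.1, h₁.2.1.inter h₂.2.1, fun a ⟨ha₁, ha₂⟩ => ?_⟩
  obtain ⟨E₁, hE₁, V₁, hV₁, haV₁, hb₁, hp₁⟩ := h₁.2.2 a ha₁
  obtain ⟨E₂, hE₂, V₂, hV₂, haV₂, hb₂, hp₂⟩ := h₂.2.2 a ha₂
  have hE := ε.inter' E₁ hE₁ E₂ hE₂
  refine ⟨E₁ ∩ E₂, hE, V₁ ∩ V₂, hV₁.inter hV₂,
    subset_inter ((a.mono' _ hE E₁ hE₁ inter_subset_left).trans haV₁)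
      ((a.mono' _ hE E₂ hE₂ inter_subset_right).trans haV₂),
    fun b hb => ⟨hb₁ b ?_, hb₂ b ?_⟩, fun x hx => ⟨hp₁ x hx.1, hp₂ x hx.2⟩⟩
  · exact b.comp_subset_of_comp_subset hE hE₁ inter_subset_left hV₁ (hb.trans inter_subset_left)
  · exact b.comp_subset_of_comp_subset hE hE₂ inter_subset_right hV₂ (hb.trans inter_subset_right)

lemma sUnion_mem_G0 {S : Set (Set (CompletionPts ε))} (hS : ∀ W ∈ S, W ∈ G0 ε) :
    ⋃₀ S ∈ G0 ε := by
  refine ⟨?_, ?_, ?_⟩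
  · rw [preimage_sUnion]
    exact isOpen_biUnion fun W hW => (hS W hW).1
  · change IsOpen (incl0 ε ⁻¹' ⋃₀ S)
    rw [preimage_sUnion]
    exact isOpen_biUnion fun W hW => (hS W hW).2.1
  · rintro a ⟨W, hWS, haW⟩
    obtain ⟨E, hE, V, hV, haV, hb, hp⟩ := (hS W hWS).2.2 a haW
    exact ⟨E, hE, V, hV, haV, fun b hbV => ⟨W, hWS, hb b hbV⟩, fun x hx => ⟨W, hWS, hp x hx⟩⟩

variable (ε) in
abbrev G0Topology : TopologicalSpace (CompletionPts ε) where
  IsOpen := (· ∈ G0 ε)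
  isOpen_univ := univ_mem_G0
  isOpen_inter _ _ := inter_mem_G0
  isOpen_sUnion _ := sUnion_mem_G0

lemma isOpen_iff_mem_G0 {W : Set (CompletionPts ε)} : IsOpen W ↔ W ∈ G0 ε := by
  rw [show CompletionPts.instTopologicalSpace ε = G0Topology ε from
    generateFrom_setOfPred_isOpen (G0Topology ε)]
  rfl

lemma exists_mem_G0_preimage_incl0 {E V : Set X} (hE : E ∈ ε.sets) (hV : IsQSatOpen E V) :
    ∃ W ∈ G0 ε, incl0 ε ⁻¹' W = {a : EndPt ε | a.comp E ⊆ V} := by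
  let W := glueSets V {a : EndPt ε | a.comp E ⊆ V} fun x =>
    hV.mem_iff_pathComponentIn_subset (x.2 E hE)
  exact ⟨W, ⟨hV.2.1, isOpen_generateFrom_of_mem ⟨E, hE, V, hV, rfl⟩,
    fun _ ha => ⟨E, hE, V, hV, ha, fun _ hb => hb, fun _ hx => hx⟩⟩, rfl⟩

end G0

lemma continuous_incl0 (ε : Externology X) : Continuous (incl0 ε) :=
  continuous_generateFrom_iff.mpr fun _ hW => hW.2.1

lemma isInducing_incl0 (ε : Externology X) : IsInducing (incl0 ε) := by
  refine ⟨le_antisymm (continuous_incl0 ε).le_induced (le_generateFrom ?_)⟩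
  rintro _ ⟨E, hE, V, hV, rfl⟩
  obtain ⟨W, hW, hWV⟩ := exists_mem_G0_preimage_incl0 hE hV
  exact ⟨W, isOpen_generateFrom_of_mem hW, hWV⟩

/-- the family `𝒢₀` is a topology on the push-out `X ∪_{L(X)} Ě(X)` (i.e. the
open sets of the topology it generates are exactly the members of `𝒢₀`), and with it
`incl₀ : Ě(X) → X ∪_{L(X)} Ě(X)` is a homeomorphism onto its image. -/
theorem stmt_5 (ε : Externology X) :
    (∀ W : Set (CompletionPts ε), IsOpen W ↔ W ∈ G0 ε) ∧ IsEmbedding (incl0 ε) :=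
  ⟨fun _ => isOpen_iff_mem_G0, isInducing_incl0 ε, incl0_injective ε⟩
end

section
/- For an exterior space X, the family {W₀(E) | E ∈ ε(X)}, where W₀(E) = p₀(E) ∪ incl₀(Ě(X)), is an externology on the completion space (X ∪_{L(X)} Ě(X), 𝒢₀); in particular W₀(E₁) ∩ W₀(E₂) = W₀(E₁ ∩ E₂) for E₁, E₂ ∈ ε(X). -/
open Set Topology Filter

universe u v

variable {X : Type u} {Y : Type v} [TopologicalSpace X] [TopologicalSpace Y]

/-!
Every `W₀(E)` contains all the ends, and a set containing all the ends is `W₀` of its trace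
`p₀⁻¹ W` on `X`. The trace of `W₀(E)` is `E ∪ L(X)`, and `W₀(E ∪ L(X)) = W₀(E)` because points
of `L(X)` are glued to ends; so `W₀` turns intersections into intersections. An open
`U ⊇ W₀(E)` is `W₀(p₀⁻¹ U)` with `p₀⁻¹ U ⊇ E` open, hence exterior.
-/

/- A point of the push-out is recorded by the part of it lying outside `L(X)`; this is constant
on glued pairs, so it separates `p₀ x` from everything else as soon as `x ∉ L(X)`. -/
def outsideElimit (ε : Externology X) : CompletionPts ε → Set X :=
  Quot.lift (Sum.elim (fun x => {x} \ Elimit ε) fun _ => ∅) <| by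
    rintro _ _ ⟨x⟩
    exact sdiff_eq_empty.2 (singleton_subset_iff.2 x.2)

lemma eq_of_p0_eq {ε : Externology X} {x y : X} (h : p0 ε x = p0 ε y) (hx : x ∉ Elimit ε) :
    x = y := by
  have : {x} \ Elimit ε = {y} \ Elimit ε := congrArg (outsideElimit ε) h
  exact (this ▸ ⟨rfl, hx⟩ : x ∈ {y} \ Elimit ε).1

lemma mem_Elimit_of_p0_eq_incl0 {ε : Externology X} {x : X} {a : EndPt ε}
    (h : p0 ε x = incl0 ε a) : x ∈ Elimit ε := by
  have : {x} \ Elimit ε = ∅ := congrArg (outsideElimit ε) h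
  exact singleton_subset_iff.1 (sdiff_eq_empty.1 this)

lemma p0_mem_range_incl0_iff {ε : Externology X} {x : X} :
    p0 ε x ∈ range (incl0 ε) ↔ x ∈ Elimit ε :=
  ⟨fun ⟨_, h⟩ => mem_Elimit_of_p0_eq_incl0 h.symm,
    fun hx => ⟨endOf ε ⟨x, hx⟩, (Quot.sound (CompletionRel.glue ⟨x, hx⟩)).symm⟩⟩

lemma range_p0_union_range_incl0 (ε : Externology X) :
    range (p0 ε) ∪ range (incl0 ε) = univ := by
  refine eq_univ_of_forall ?_
  rintro ⟨x | a⟩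
  exacts [Or.inl ⟨x, rfl⟩, Or.inr ⟨a, rfl⟩]

lemma preimage_p0_W0 (ε : Externology X) (E : Set X) :
    p0 ε ⁻¹' W0 ε E = E ∪ Elimit ε := by
  ext x
  simp only [W0, preimage_union, mem_union, mem_preimage, p0_mem_range_incl0_iff]
  refine ⟨?_, ?_⟩
  · rintro (⟨y, hy, hyx⟩ | hx)
    · by_cases hx : x ∈ Elimit ε
      · exact Or.inr hx
      · exact Or.inl (eq_of_p0_eq hyx.symm hx ▸ hy)
    · exact Or.inr hx
  · rintro (hx | hx)
    · exact Or.inl (mem_image_of_mem _ hx)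
    · exact Or.inr hx

lemma W0_union_Elimit (ε : Externology X) (E : Set X) :
    W0 ε (E ∪ Elimit ε) = W0 ε E := by
  have : p0 ε '' Elimit ε ⊆ range (incl0 ε) :=
    image_subset_iff.2 fun _ hx => p0_mem_range_incl0_iff.2 hx
  rw [W0, W0, image_union, union_assoc, union_eq_right.2 this]

lemma W0_preimage_p0 {ε : Externology X} {W : Set (CompletionPts ε)}
    (h : range (incl0 ε) ⊆ W) : W0 ε (p0 ε ⁻¹' W) = W := by
  rw [W0, image_preimage_eq_inter_range, inter_union_distrib_right,
    range_p0_union_range_incl0, inter_univ, union_eq_left.2 h]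

lemma W0_inter (ε : Externology X) (E₁ E₂ : Set X) :
    W0 ε E₁ ∩ W0 ε E₂ = W0 ε (E₁ ∩ E₂) := by
  have hends : range (incl0 ε) ⊆ W0 ε E₁ ∩ W0 ε E₂ :=
    subset_inter subset_union_right subset_union_right
  rw [← W0_preimage_p0 hends, preimage_inter, preimage_p0_W0, preimage_p0_W0,
    ← inter_union_distrib_right, W0_union_Elimit]

lemma Elimit_subset {ε : Externology X} {E : Set X} (hE : E ∈ ε.sets) : Elimit ε ⊆ E :=
  sInter_subset_of_mem hE

lemma EndPt.comp_subset_s6 {ε : Externology X} (a : EndPt ε) {E : Set X} (hE : E ∈ ε.sets) :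
    a.comp E ⊆ E := by
  obtain ⟨x, -, hx⟩ := a.isComp' E hE
  exact hx ▸ pathComponentIn_subset

lemma isQSatOpen_self {E : Set X} (hE : IsOpen E) : IsQSatOpen E E :=
  ⟨subset_rfl, hE, fun _ _ => pathComponentIn_subset⟩

lemma W0_mem_G0 {ε : Externology X} {E : Set X} (hE : E ∈ ε.sets) : W0 ε E ∈ G0 ε := by
  refine ⟨?_, ?_, fun a _ => ⟨E, hE, E, isQSatOpen_self (ε.isOpen' E hE), a.comp_subset_s6 hE,
    fun b _ => Or.inr ⟨b, rfl⟩, fun x hx => Or.inl ⟨x, hx, rfl⟩⟩⟩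
  · rw [preimage_p0_W0, union_eq_left.2 (Elimit_subset hE)]
    exact ε.isOpen' E hE
  · simpa only [W0, mem_union, mem_range_self, or_true, ofPred_true] using isOpen_univ

lemma isOpen_W0 {ε : Externology X} {E : Set X} (hE : E ∈ ε.sets) : IsOpen (W0 ε E) :=
  .basic _ (W0_mem_G0 hE)

lemma continuous_p0 (ε : Externology X) : Continuous (p0 ε) :=
  continuous_generateFrom_iff.2 fun _ hW => hW.1

def W0Externology (ε : Externology X) : Externology (CompletionPts ε) where
  sets := {W | ∃ E ∈ ε.sets, W = W0 ε E}
  nonempty' :=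
    let ⟨E, hE⟩ := ε.nonempty'
    ⟨W0 ε E, E, hE, rfl⟩
  isOpen' := by
    rintro _ ⟨E, hE, rfl⟩
    exact isOpen_W0 hE
  inter' := by
    rintro _ ⟨E₁, h₁, rfl⟩ _ ⟨E₂, h₂, rfl⟩
    exact ⟨E₁ ∩ E₂, ε.inter' E₁ h₁ E₂ h₂, W0_inter ε E₁ E₂⟩
  superset' := by
    rintro _ ⟨E, hE, rfl⟩ U hU hEU
    refine ⟨p0 ε ⁻¹' U, ε.superset' E hE _ (hU.preimage (continuous_p0 ε)) ?_,
      (W0_preimage_p0 (subset_union_right.trans hEU)).symm⟩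
    exact image_subset_iff.1 (subset_union_left.trans hEU)

/-- the family `{W₀(E) | E ∈ ε(X)}` is an externology on
`(X ∪_{L(X)} Ě(X), 𝒢₀)`, and `W₀(E₁) ∩ W₀(E₂) = W₀(E₁ ∩ E₂)`. -/
theorem stmt_6 (ε : Externology X) :
    (∀ E₁ ∈ ε.sets, ∀ E₂ ∈ ε.sets, W0 ε E₁ ∩ W0 ε E₂ = W0 ε (E₁ ∩ E₂)) ∧
      ∃ ext : Externology (CompletionPts ε),
        ext.sets = {W | ∃ E ∈ ε.sets, W = W0 ε E} :=
  ⟨fun E₁ _ E₂ _ => W0_inter ε E₁ E₂, W0Externology ε, rfl⟩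
end
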